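/- If in addition \(|q| < |\zeta|^2\), then the Tate x-coordinate \(x(\zeta) = \sum_{n=0}^{\infty} \frac{q^n \zeta}{(1 - q^n \zeta)^2} + \sum_{n=1}^{\infty} \frac{q^{-n} \zeta}{(1 - q^{-n} \zeta)^2} - 2\sum_{n=1}^{\infty} \frac{n q^n}{1 - q^n}\) satisfies the exact equality \(|x(\zeta)| = |\zeta|\). -/

import Mathlib

/-!
Since `‖1 - x‖ = 1` whenever `‖x‖ < 1`, a term `x / (1 - x) ^ 2` has norm `‖x‖` when `‖x‖ < 1`,
and norm `‖x⁻¹‖` when `‖x⁻¹‖ < 1`, because `x ↦ x / (1 - x) ^ 2` is invariant under `x ↦ x⁻¹`.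
So the `n = 0` term `ζ / (1 - ζ) ^ 2` has norm `‖ζ‖`, while the remaining terms of the three
series are bounded by `‖q‖ * ‖ζ‖`, `‖q‖ / ‖ζ‖` and `‖q‖`, all smaller than `‖ζ‖` (the middle one
because `‖q‖ < ‖ζ‖ ^ 2`). The ultrametric inequality then gives `‖x(ζ)‖ = ‖ζ‖`.
-/

open IsUltrametricDist

lemma inv_div_one_sub_inv_sq {K : Type*} [Field K] (x : K) :
    x⁻¹ / (1 - x⁻¹) ^ 2 = x / (1 - x) ^ 2 := by
  rcases eq_or_ne x 0 with rfl | hx0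
  · simp
  rcases eq_or_ne x 1 with rfl | hx1
  · simp
  have : 1 - x ≠ 0 := sub_ne_zero.mpr hx1.symm
  field_simp
  ring

lemma norm_one_sub_of_norm_lt_one {R : Type*} [SeminormedRing R] [NormOneClass R]
    [IsUltrametricDist R] {x : R} (hx : ‖x‖ < 1) : ‖1 - x‖ = 1 := by
  rw [sub_eq_add_neg, norm_add_eq_max_of_norm_ne_norm (by simpa using hx.ne'), norm_one,
    norm_neg, max_eq_left hx.le]

lemma norm_div_one_sub_sq_of_norm_lt_one {R : Type*} [NormedDivisionRing R]
    [IsUltrametricDist R] {x : R} (hx : ‖x‖ < 1) : ‖x / (1 - x) ^ 2‖ = ‖x‖ := by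
  rw [norm_div, norm_pow, norm_one_sub_of_norm_lt_one hx, one_pow, div_one]

section UltrametricField

variable {K : Type*} [NormedField K] [IsUltrametricDist K]

lemma norm_div_one_sub_sq_of_norm_inv_lt_one {x : K} (hx : ‖x⁻¹‖ < 1) :
    ‖x / (1 - x) ^ 2‖ = ‖x⁻¹‖ := by
  rw [← inv_div_one_sub_inv_sq, norm_div_one_sub_sq_of_norm_lt_one hx]

variable {q ζ : K}

lemma summable_pow_mul_div_one_sub_sq [CompleteSpace K] (hq : ‖q‖ < 1) (hζ : ‖ζ‖ < 1) :
    Summable fun n : ℕ => q ^ n * ζ / (1 - q ^ n * ζ) ^ 2 := by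
  refine .of_norm_bounded ((summable_geometric_of_lt_one (norm_nonneg q) hq).mul_right ‖ζ‖)
    fun n => ?_
  have hle : ‖q ^ n * ζ‖ ≤ ‖q‖ ^ n * ‖ζ‖ := by rw [norm_mul, norm_pow]
  have hlt : ‖q ^ n * ζ‖ < 1 :=
    hle.trans_lt (mul_lt_one_of_nonneg_of_lt_one_right (pow_le_one₀ (norm_nonneg q) hq.le)
      (norm_nonneg ζ) hζ)
  exact (norm_div_one_sub_sq_of_norm_lt_one hlt).trans_le hle

lemma norm_tsum_pow_succ_mul_div_one_sub_sq_le (hq : ‖q‖ ≤ 1) (hqζ : ‖q‖ * ‖ζ‖ < 1) :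
    ‖∑' n : ℕ, q ^ (n + 1) * ζ / (1 - q ^ (n + 1) * ζ) ^ 2‖ ≤ ‖q‖ * ‖ζ‖ := by
  refine norm_tsum_le_of_forall_le_of_nonneg (by positivity) fun n => ?_
  have hle : ‖q ^ (n + 1) * ζ‖ ≤ ‖q‖ * ‖ζ‖ := by
    rw [norm_mul, norm_pow]
    gcongr
    exact pow_le_of_le_one (norm_nonneg q) hq n.succ_ne_zero
  rw [norm_div_one_sub_sq_of_norm_lt_one (hle.trans_lt hqζ)]
  exact hle

lemma norm_tsum_inv_pow_succ_mul_div_one_sub_sq_le (hq : ‖q‖ ≤ 1) (hqζ : ‖q‖ < ‖ζ‖) :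
    ‖∑' n : ℕ, q⁻¹ ^ (n + 1) * ζ / (1 - q⁻¹ ^ (n + 1) * ζ) ^ 2‖ ≤ ‖q‖ / ‖ζ‖ := by
  have hζ : 0 < ‖ζ‖ := (norm_nonneg q).trans_lt hqζ
  refine norm_tsum_le_of_forall_le_of_nonneg (by positivity) fun n => ?_
  have hle : ‖(q⁻¹ ^ (n + 1) * ζ)⁻¹‖ ≤ ‖q‖ / ‖ζ‖ := by
    rw [norm_inv, norm_mul, norm_pow, norm_inv, inv_pow, inv_mul_eq_div, inv_div]
    gcongr
    exact pow_le_of_le_one (norm_nonneg q) hq n.succ_ne_zero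
  rw [norm_div_one_sub_sq_of_norm_inv_lt_one (hle.trans_lt ((div_lt_one hζ).mpr hqζ))]
  exact hle

lemma norm_tsum_nsmul_pow_succ_div_one_sub_le (hq : ‖q‖ < 1) :
    ‖∑' n : ℕ, ((n + 1) • q ^ (n + 1)) / (1 - q ^ (n + 1))‖ ≤ ‖q‖ := by
  refine norm_tsum_le_of_forall_le_of_nonneg (norm_nonneg q) fun n => ?_
  have hpow : ‖q ^ (n + 1)‖ ≤ ‖q‖ := by
    rw [norm_pow]
    exact pow_le_of_le_one (norm_nonneg q) hq.le n.succ_ne_zero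
  rw [norm_div, norm_one_sub_of_norm_lt_one (hpow.trans_lt hq), div_one]
  exact (IsUltrametricDist.norm_nsmul_le _ _).trans hpow

end UltrametricField

theorem tate_x_coordinate_norm_eq_general {K : Type*} [NormedField K] [CompleteSpace K]
    (hu : IsUltrametricDist K) (q ζ : K)
    (hζu : ‖ζ‖ < 1)
    (hsq : ‖q‖ < ‖ζ‖ ^ 2) :
    ‖(∑' n : ℕ, q ^ n * ζ / (1 - q ^ n * ζ) ^ 2)
        + (∑' n : ℕ, q⁻¹ ^ (n + 1) * ζ / (1 - q⁻¹ ^ (n + 1) * ζ) ^ 2)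
        - (2 : K) * ∑' n : ℕ, ((n + 1) • q ^ (n + 1)) / (1 - q ^ (n + 1))‖
      = ‖ζ‖ := by
  have hζ0 : 0 < ‖ζ‖ :=
    norm_pos_iff.mpr <| by rintro rfl; simpa using (norm_nonneg q).trans_lt hsq
  have hqζ : ‖q‖ < ‖ζ‖ := hsq.trans (pow_lt_self_of_lt_one₀ hζ0 hζu one_lt_two)
  have hq1 : ‖q‖ < 1 := hqζ.trans hζu
  rw [(summable_pow_mul_div_one_sub_sq hq1 hζu).tsum_eq_zero_add, pow_zero, one_mul]
  set T₁ := ∑' n : ℕ, q ^ (n + 1) * ζ / (1 - q ^ (n + 1) * ζ) ^ 2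
  set T₂ := ∑' n : ℕ, q⁻¹ ^ (n + 1) * ζ / (1 - q⁻¹ ^ (n + 1) * ζ) ^ 2
  set T₃ := ∑' n : ℕ, ((n + 1) • q ^ (n + 1)) / (1 - q ^ (n + 1))
  have hrest : ‖T₁ + T₂ + -(2 * T₃)‖ < ‖ζ‖ := by
    refine (norm_add_le_max _ _).trans_lt <|
      max_lt ((norm_add_le_max _ _).trans_lt (max_lt ?_ ?_)) ?_
    · exact (norm_tsum_pow_succ_mul_div_one_sub_sq_le hq1.le (mul_lt_one_of_nonneg_of_lt_one_left
        (norm_nonneg q) hq1 hζu.le)).trans_lt (mul_lt_of_lt_one_left hζ0 hq1)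
    · exact (norm_tsum_inv_pow_succ_mul_div_one_sub_sq_le hq1.le hqζ).trans_lt
        ((div_lt_iff₀ hζ0).mpr (sq ‖ζ‖ ▸ hsq))
    · calc ‖-(2 * T₃)‖ = ‖(2 : K)‖ * ‖T₃‖ := by rw [norm_neg, norm_mul]
        _ ≤ ‖T₃‖ := mul_le_of_le_one_left (norm_nonneg _) (by simpa using norm_natCast_le_one K 2)
        _ ≤ ‖q‖ := norm_tsum_nsmul_pow_succ_div_one_sub_le hq1
        _ < ‖ζ‖ := hqζ
  have hlead := norm_div_one_sub_sq_of_norm_lt_one hζu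
  rw [sub_eq_add_neg, add_assoc, add_assoc, ← add_assoc T₁,
    norm_add_eq_max_of_norm_ne_norm (hlead ▸ hrest.ne'), hlead, max_eq_left hrest.le]

/-- Key computation in the proof of Theorem 1.5: for a complete nonarchimedean field `K`,
`q ∈ K` with `0 < |q| < 1` and `ζ ∈ K` with `|q| < |ζ| < 1`, if moreover `|q| < |ζ|²`,
then the Tate x-coordinate
`x(ζ) = ∑_{n≥0} qⁿζ/(1-qⁿζ)² + ∑_{n≥1} q⁻ⁿζ/(1-q⁻ⁿζ)² - 2·∑_{n≥1} n·qⁿ/(1-qⁿ)`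
satisfies the exact equality `|x(ζ)| = |ζ|`. -/
theorem tate_x_coordinate_norm_eq {K : Type*} [NormedField K] [CompleteSpace K]
    (hu : IsUltrametricDist K) (q ζ : K)
    (hq0 : 0 < ‖q‖) (hq1 : ‖q‖ < 1) (hζl : ‖q‖ < ‖ζ‖) (hζu : ‖ζ‖ < 1)
    (hsq : ‖q‖ < ‖ζ‖ ^ 2) :
    ‖(∑' n : ℕ, q ^ n * ζ / (1 - q ^ n * ζ) ^ 2)
        + (∑' n : ℕ, q⁻¹ ^ (n + 1) * ζ / (1 - q⁻¹ ^ (n + 1) * ζ) ^ 2)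
        - (2 : K) * ∑' n : ℕ, ((n + 1) • q ^ (n + 1)) / (1 - q ^ (n + 1))‖
      = ‖ζ‖ :=
  tate_x_coordinate_norm_eq_general hu q ζ hζu hsq
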